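/- Let n ≥ 3 be an integer, m ∈ ℝ with m ≠ 0, set f(r) := r² − 2m r^{2−n}, and let I ⊆ (0,∞) be a nonempty open interval on which f > 0. A smooth function V : I × ℝ^{n−1} → ℝ, written V = V(r,x), satisfies the system (i) ∂²V/∂r² + ( f'/(2f) ) ∂V/∂r − ( f''/(2f) ) V = 0, (ii) ∂²V/∂r∂x^A − (1/r) ∂V/∂x^A = 0 for all A, (iii) ∂²V/∂x^A∂x^B + δ_{AB} · r ( f ∂V/∂r − (f'/2) V ) = 0 for all A, B, if and only if there is a constant c̃ ∈ ℝ such that V(r,x) = c̃ √(f(r)) for all (r,x). -/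

import Mathlib

/-- Directional (partial) derivative of a real-valued function along a vector `v`. -/
noncomputable def pd {E : Type*} [AddCommGroup E] [Module ℝ E] [TopologicalSpace E]
    (f : E → ℝ) (v : E) (x : E) : ℝ :=
  lineDeriv ℝ f x v

/-- The radial coordinate direction in `ℝ × ℝ^{n-1}`. -/
def dirR (d : ℕ) : ℝ × (Fin d → ℝ) := (1, 0)

/-- The `A`-th boundary coordinate direction in `ℝ × ℝ^{n-1}`. -/
def dirX (d : ℕ) (A : Fin d) : ℝ × (Fin d → ℝ) := (0, Pi.single A 1)

/-- The radial function `f(r) = r² − 2m r^{2−n}`. -/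
noncomputable def fBK (n : ℕ) (m : ℝ) (r : ℝ) : ℝ :=
  r ^ 2 - 2 * m * r ^ ((2 : ℝ) - n)

/-!
Write `u = ∂_A V` along a radial line. Equation (ii) says `u' = u / r`, hence `u'' = 0`, so
differentiating (i) along `x^A` and commuting derivatives leaves `(r f'' - f') u = 0`. For the
Birmingham–Kottler function `f' - r f'' = 2mn(n - 2) r^{1-n} ≠ 0`, so `V` does not depend on `x`,
and then (iii) reads `f V' = f' V / 2`, i.e. `(V / √f)' = 0`. Conversely `c √f` solves (i) and
`f V' = f' V / 2` for every positive `f`.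
-/

open Filter Topology Set

section LineDeriv

variable {E : Type*} [NormedAddCommGroup E] [NormedSpace ℝ E] {U : Set E} {V : E → ℝ} {q : E}

theorem pd_eq_fderiv (hV : DifferentiableAt ℝ V q) (v : E) : pd V v q = fderiv ℝ V q v :=
  hV.lineDeriv_eq_fderiv

theorem pd_eq_zero_of_forall_eq {v : E} (h : ∀ t : ℝ, V (q + t • v) = V q) : pd V v q = 0 := by
  simp only [pd, lineDeriv, h, deriv_const]

theorem pd_congr_of_eventuallyEq {W : E → ℝ} (h : V =ᶠ[𝓝 q] W) (v : E) : pd V v q = pd W v q :=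
  h.lineDeriv_eq

theorem pd_eq_const_mul_sub_const_mul {G H : E → ℝ} {v : E} {a b : ℝ}
    (hG : DifferentiableAt ℝ G q) (hH : DifferentiableAt ℝ H q)
    (h : ∀ t : ℝ, V (q + t • v) = a * G (q + t • v) - b * H (q + t • v)) :
    pd V v q = a * pd G v q - b * pd H v q := by
  have hG' := hG.hasFDerivAt.hasLineDerivAt v
  have hH' := hH.hasFDerivAt.hasLineDerivAt v
  simp only [pd, lineDeriv, h]
  rw [hG'.deriv, hH'.deriv]
  exact ((hG'.const_mul a).sub (hH'.const_mul b)).deriv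

theorem contDiffOn_pd {k : WithTop ℕ∞} (hU : IsOpen U) (hV : ContDiffOn ℝ (k + 1) V U) (v : E) :
    ContDiffOn ℝ k (pd V v) U := by
  refine ((hV.fderiv_of_isOpen hU le_rfl).clm_apply (contDiffOn_const (c := v))).congr
    fun y hy => ?_
  exact pd_eq_fderiv ((hV.contDiffAt (hU.mem_nhds hy)).differentiableAt (by simp)) v

theorem pd_comm (hU : IsOpen U) (hV : ContDiffOn ℝ 2 V U) (hq : q ∈ U) (v w : E) :
    pd (pd V v) w q = pd (pd V w) v q := by
  have hdiff : DifferentiableAt ℝ (fderiv ℝ V) q :=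
    ((hV.fderiv_of_isOpen hU le_rfl).contDiffAt (hU.mem_nhds hq)).differentiableAt one_ne_zero
  have hpd : ∀ u u' : E, pd (pd V u) u' q = fderiv ℝ (fderiv ℝ V) q u' u := fun u u' => by
    have hev : pd V u =ᶠ[𝓝 q] fun y => fderiv ℝ V y u := by
      filter_upwards [hU.mem_nhds hq] with y hy
      exact pd_eq_fderiv ((hV.contDiffAt (hU.mem_nhds hy)).differentiableAt two_ne_zero) u
    rw [pd_congr_of_eventuallyEq hev, pd_eq_fderiv (hdiff.clm_apply (differentiableAt_const u)),
      fderiv_clm_apply hdiff (differentiableAt_const u)]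
    simp
  rw [hpd, hpd, (hV.contDiffAt (hU.mem_nhds hq)).isSymmSndFDerivAt (by simp) w v]

theorem pd_pd_pd_comm (hU : IsOpen U) (hV : ContDiffOn ℝ 3 V U) (hq : q ∈ U) (v w : E) :
    pd (pd (pd V v) v) w q = pd (pd (pd V w) v) v q := by
  have hV2 : ContDiffOn ℝ 2 V U := hV.of_le (by norm_num)
  rw [pd_comm hU (contDiffOn_pd hU hV v) hq]
  refine pd_congr_of_eventuallyEq ?_ v
  filter_upwards [hU.mem_nhds hq] with y hy
  exact pd_comm hU hV2 hy v w

end LineDeriv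

section Slices

variable {d : ℕ} {F : ℝ × (Fin d → ℝ) → ℝ}

theorem pd_dirR (F : ℝ × (Fin d → ℝ) → ℝ) (r : ℝ) (x : Fin d → ℝ) :
    pd F (dirR d) (r, x) = deriv (fun s => F (s, x)) r := by
  have h : (fun t : ℝ => F ((r, x) + t • dirR d)) = fun t => (fun s => F (s, x)) (r + t) := by
    funext t
    simp [dirR]
  rw [pd, lineDeriv, h, deriv_comp_const_add (fun s => F (s, x)) r 0, add_zero]

theorem add_smul_dirX (r t : ℝ) (x : Fin d → ℝ) (A : Fin d) :
    (r, x) + t • dirX d A = (r, x + t • Pi.single A 1) := by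
  simp [dirX]

theorem pd_dirR_eq_deriv_of_eqOn {I : Set ℝ} (hI : IsOpen I) {g : ℝ → ℝ} {x : Fin d → ℝ}
    (h : ∀ s ∈ I, F (s, x) = g s) {r : ℝ} (hr : r ∈ I) : pd F (dirR d) (r, x) = deriv g r := by
  rw [pd_dirR]
  exact EventuallyEq.deriv_eq (eventually_of_mem (hI.mem_nhds hr) h)

theorem pd_dirX_eq_zero_of_forall_eq {r c : ℝ} (h : ∀ y, F (r, y) = c) (x : Fin d → ℝ) (A : Fin d) :
    pd F (dirX d A) (r, x) = 0 :=
  pd_eq_zero_of_forall_eq fun t => by rw [add_smul_dirX, h, h]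

theorem eq_of_forall_pd_dirX_eq_zero {r : ℝ} (hF : ∀ y, DifferentiableAt ℝ F (r, y))
    (h : ∀ y A, pd F (dirX d A) (r, y) = 0) (x y : Fin d → ℝ) : F (r, x) = F (r, y) := by
  have hg : Differentiable ℝ fun y => F (r, y) := fun y =>
    (hF y).comp y ((differentiableAt_const r).prodMk differentiableAt_id)
  refine is_const_of_fderiv_eq_zero hg (fun y => ?_) x y
  refine ContinuousLinearMap.coe_injective (LinearMap.pi_ext fun A c => ?_)
  have hA : fderiv ℝ (fun y => F (r, y)) y (Pi.single A 1) = 0 := by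
    rw [← pd_eq_fderiv (hg y), ← h y A]
    simp only [pd, lineDeriv, add_smul_dirX]
  have hc : (Pi.single A c : Fin d → ℝ) = c • Pi.single A 1 := by simp [← Pi.single_smul]
  simp only [ContinuousLinearMap.coe_coe, hc, map_smul, hA]
  simp

end Slices

section OneVariable

variable {f u : ℝ → ℝ} {r : ℝ}

theorem deriv_deriv_eq_zero_of_deriv_eventuallyEq_div (hu : DifferentiableAt ℝ u r) (hr : r ≠ 0)
    (h : deriv u =ᶠ[𝓝 r] fun s => u s / s) : deriv (deriv u) r = 0 := by
  rw [h.deriv_eq]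
  refine (hu.hasDerivAt.div (hasDerivAt_id' r) hr).deriv.trans ?_
  rw [h.eq_of_nhds]
  field_simp
  simp

theorem exists_eq_mul_sqrt_of_mul_deriv_eq {I : Set ℝ} (hI : IsOpen I) (hI' : IsPreconnected I)
    (hf : DifferentiableOn ℝ f I) (hfpos : ∀ r ∈ I, 0 < f r) (hu : DifferentiableOn ℝ u I)
    (h : ∀ r ∈ I, f r * deriv u r = deriv f r / 2 * u r) :
    ∃ c, ∀ r ∈ I, u r = c * √(f r) := by
  have hquot : ∀ r ∈ I, HasDerivAt (fun s => u s / √(f s)) 0 r := by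
    intro r hr
    have hdf := ((hf r hr).differentiableAt (hI.mem_nhds hr)).hasDerivAt
    have hdu := ((hu r hr).differentiableAt (hI.mem_nhds hr)).hasDerivAt
    have hsq := Real.sq_sqrt (hfpos r hr).le
    have hpos := Real.sqrt_pos.2 (hfpos r hr)
    refine (hdu.div (hdf.sqrt (hfpos r hr).ne') hpos.ne').congr_deriv ?_
    rw [div_eq_zero_iff]
    left
    field_simp
    linear_combination 2 * h r hr + 2 * deriv u r * hsq
  obtain ⟨c, hc⟩ := hI.exists_is_const_of_deriv_eq_zero hI'
    (fun r hr => (hquot r hr).differentiableAt.differentiableWithinAt)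
    (fun r hr => (hquot r hr).deriv)
  refine ⟨c, fun r hr => ?_⟩
  rw [← hc r hr, div_mul_cancel₀ _ (Real.sqrt_pos.2 (hfpos r hr)).ne']

end OneVariable

section SqrtSolution

variable {f : ℝ → ℝ} {r : ℝ}

theorem mul_deriv_const_mul_sqrt (hf : DifferentiableAt ℝ f r) (hfr : 0 < f r) (c : ℝ) :
    f r * deriv (fun s => c * √(f s)) r = deriv f r / 2 * (c * √(f r)) := by
  rw [((hf.hasDerivAt.sqrt hfr.ne').const_mul c).deriv]
  have hsq := Real.sq_sqrt hfr.le
  field_simp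
  linear_combination -(c * deriv f r) * hsq

theorem deriv_deriv_const_mul_sqrt {I : Set ℝ} (hI : IsOpen I) (hf : ContDiffOn ℝ 2 f I)
    (hfpos : ∀ r ∈ I, 0 < f r) (hr : r ∈ I) (c : ℝ) :
    deriv (deriv fun s => c * √(f s)) r
      + deriv f r / (2 * f r) * deriv (fun s => c * √(f s)) r
      - deriv (deriv f) r / (2 * f r) * (c * √(f r)) = 0 := by
  have hdiff : ∀ s ∈ I, DifferentiableAt ℝ f s := fun s hs =>
    (hf.contDiffAt (hI.mem_nhds hs)).differentiableAt two_ne_zero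
  have hS : ∀ s ∈ I, deriv (fun s => c * √(f s)) s = c * (deriv f s / (2 * √(f s))) :=
    fun s hs => ((hdiff s hs).hasDerivAt.sqrt (hfpos s hs).ne').const_mul c |>.deriv
  have hf' : HasDerivAt (deriv f) (deriv (deriv f) r) r :=
    ((hf.deriv_of_isOpen hI le_rfl).contDiffAt (hI.mem_nhds hr)).differentiableAt
      one_ne_zero |>.hasDerivAt
  have hsqrt := (hdiff r hr).hasDerivAt.sqrt (hfpos r hr).ne'
  have hpos := Real.sqrt_pos.2 (hfpos r hr)
  have hsq := Real.sq_sqrt (hfpos r hr).le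
  have hS' : deriv (fun s => c * (deriv f s / (2 * √(f s)))) r
      = c * ((deriv (deriv f) r * (2 * √(f r)) - deriv f r * (2 * (deriv f r / (2 * √(f r)))))
        / (2 * √(f r)) ^ 2) :=
    ((hf'.div (hsqrt.const_mul 2) (by positivity)).const_mul c).deriv
  rw [EventuallyEq.deriv_eq (eventually_of_mem (hI.mem_nhds hr) hS), hS r hr, hS']
  set q := √(f r)
  rw [← hsq]
  field_simp
  ring

end SqrtSolution

section BirminghamKottler

variable (n : ℕ) (m : ℝ) {r : ℝ}

theorem contDiffOn_fBK {k : WithTop ℕ∞} : ContDiffOn ℝ k (fBK n m) (Ioi 0) := fun _ hr =>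
  ((contDiff_id.pow 2).contDiffAt.sub
    ((Real.contDiffAt_rpow_const_of_ne (ne_of_gt hr)).const_smul (2 * m))).contDiffWithinAt

theorem hasDerivAt_fBK (hr : r ≠ 0) :
    HasDerivAt (fBK n m) (2 * r - 2 * m * (2 - n) * r ^ ((1 : ℝ) - n)) r := by
  refine ((hasDerivAt_pow 2 r).sub
    ((Real.hasDerivAt_rpow_const (p := (2 : ℝ) - n) (Or.inl hr)).const_mul (2 * m))).congr_deriv ?_
  ring_nf

theorem hasDerivAt_deriv_fBK (hr : 0 < r) :
    HasDerivAt (deriv (fBK n m)) (2 - 2 * m * (2 - n) * (1 - n) * r ^ (-(n : ℝ))) r := by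
  have hev : (fun s => 2 * s - 2 * m * (2 - n) * s ^ ((1 : ℝ) - n)) =ᶠ[𝓝 r] deriv (fBK n m) := by
    filter_upwards [Ioi_mem_nhds hr] with s hs
    exact (hasDerivAt_fBK n m (ne_of_gt hs)).deriv.symm
  refine HasDerivAt.congr_of_eventuallyEq ?_ hev.symm
  refine (((hasDerivAt_id' r).const_mul 2).sub
    ((Real.hasDerivAt_rpow_const (p := (1 : ℝ) - n) (Or.inl hr.ne')).const_mul
      (2 * m * (2 - n)))).congr_deriv ?_
  ring_nf

theorem deriv_fBK_sub_mul_deriv_deriv_fBK (hr : 0 < r) :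
    deriv (fBK n m) r - r * deriv (deriv (fBK n m)) r
      = 2 * m * n * (n - 2) * r ^ ((1 : ℝ) - n) := by
  rw [(hasDerivAt_fBK n m hr.ne').deriv, (hasDerivAt_deriv_fBK n m hr).deriv,
    show (1 : ℝ) - n = 1 + -(n : ℝ) by ring, Real.rpow_add hr, Real.rpow_one]
  ring

theorem deriv_fBK_ne_mul_deriv_deriv_fBK (hn0 : n ≠ 0) (hn2 : n ≠ 2) (hm : m ≠ 0) (hr : 0 < r) :
    deriv (fBK n m) r ≠ r * deriv (deriv (fBK n m)) r := by
  rw [← sub_ne_zero, deriv_fBK_sub_mul_deriv_deriv_fBK n m hr]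
  have hn2' : (n : ℝ) - 2 ≠ 0 := sub_ne_zero.2 (by exact_mod_cast hn2)
  have := (Real.rpow_pos_of_pos hr ((1 : ℝ) - n)).ne'
  have := (Nat.cast_ne_zero (R := ℝ)).2 hn0
  positivity

end BirminghamKottler

/-- The static KID equations (i)–(iii) for the metric `f(r)⁻¹ dr² + r² |dx|²` on `I × ℝ^d`. -/
def IsStaticPotential (d : ℕ) (f : ℝ → ℝ) (I : Set ℝ) (V : ℝ × (Fin d → ℝ) → ℝ) : Prop :=
  ∀ r ∈ I, ∀ x : Fin d → ℝ,
    (pd (pd V (dirR d)) (dirR d) (r, x)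
        + (deriv f r / (2 * f r)) * pd V (dirR d) (r, x)
        - (deriv (deriv f) r / (2 * f r)) * V (r, x) = 0) ∧
    (∀ A : Fin d,
      pd (pd V (dirX d A)) (dirR d) (r, x) - (1 / r) * pd V (dirX d A) (r, x) = 0) ∧
    (∀ A B : Fin d,
      pd (pd V (dirX d B)) (dirX d A) (r, x)
        + (if A = B then (1 : ℝ) else 0) * r *
          (f r * pd V (dirR d) (r, x) - (deriv f r / 2) * V (r, x)) = 0)

section StaticPotential

variable {d : ℕ} {f : ℝ → ℝ} {I : Set ℝ} {V : ℝ × (Fin d → ℝ) → ℝ}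

theorem IsStaticPotential.pd_dirX_eq_zero (hV : IsStaticPotential d f I V) (hI : IsOpen I)
    (hsmooth : ContDiffOn ℝ 3 V (I ×ˢ univ)) {r : ℝ} (hr : r ∈ I) (hr0 : r ≠ 0) (hf0 : f r ≠ 0)
    (hf' : deriv f r ≠ r * deriv (deriv f) r) (x : Fin d → ℝ) (A : Fin d) :
    pd V (dirX d A) (r, x) = 0 := by
  have hU : IsOpen (I ×ˢ (univ : Set (Fin d → ℝ))) := hI.prod isOpen_univ
  have hq : (r, x) ∈ I ×ˢ (univ : Set (Fin d → ℝ)) := ⟨hr, trivial⟩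
  have hdiff : ∀ {W : ℝ × (Fin d → ℝ) → ℝ},
      ContDiffOn ℝ 2 W (I ×ˢ univ) → DifferentiableAt ℝ W (r, x) := fun hW =>
    (hW.contDiffAt (hU.mem_nhds hq)).differentiableAt two_ne_zero
  have hV2 : ContDiffOn ℝ 2 V (I ×ˢ univ) := hsmooth.of_le (by norm_num)
  have hVr : ContDiffOn ℝ 2 (pd V (dirR d)) (I ×ˢ univ) := contDiffOn_pd hU hsmooth _
  have hVA : ContDiffOn ℝ 2 (pd V (dirX d A)) (I ×ˢ univ) := contDiffOn_pd hU hsmooth _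
  set u := fun s => pd V (dirX d A) (s, x)
  have hu : DifferentiableAt ℝ u r :=
    (hdiff hVA).comp (f := fun s : ℝ => (s, x)) r
      (differentiableAt_id.prodMk (differentiableAt_const x))
  have hu' : deriv u =ᶠ[𝓝 r] fun s => u s / s := by
    filter_upwards [hI.mem_nhds hr] with s hs
    have hii := (hV s hs x).2.1 A
    rwa [pd_dirR, one_div_mul_eq_div, sub_eq_zero] at hii
  have hi := pd_eq_const_mul_sub_const_mul (v := dirX d A) (V := pd (pd V (dirR d)) (dirR d))
    (a := deriv (deriv f) r / (2 * f r)) (b := deriv f r / (2 * f r))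
    (hdiff hV2) (hdiff hVr) fun t => by
      rw [add_smul_dirX]
      linear_combination (hV r hr _).1
  rw [pd_pd_pd_comm hU hsmooth hq, pd_comm hU hV2 hq] at hi
  simp only [pd_dirR] at hi
  rw [deriv_deriv_eq_zero_of_deriv_eventuallyEq_div hu hr0 hu', hu'.eq_of_nhds] at hi
  have hmul : u r * (r * deriv (deriv f) r - deriv f r) = 0 := by
    change 0 = _ * u r - _ at hi
    field_simp at hi
    linear_combination -hi
  exact (mul_eq_zero.1 hmul).resolve_right (sub_ne_zero.2 hf'.symm)

theorem IsStaticPotential.exists_eq_mul_sqrt (hV : IsStaticPotential d f I V) (hd : 0 < d)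
    (hI : IsOpen I) (hI' : IsPreconnected I) (hI0 : I ⊆ Ioi 0) (hf : DifferentiableOn ℝ f I)
    (hfpos : ∀ r ∈ I, 0 < f r) (hf' : ∀ r ∈ I, deriv f r ≠ r * deriv (deriv f) r)
    (hsmooth : ContDiffOn ℝ 3 V (I ×ˢ univ)) :
    ∃ c, ∀ r ∈ I, ∀ x, V (r, x) = c * √(f r) := by
  have hdiff : ∀ r ∈ I, ∀ y, DifferentiableAt ℝ V (r, y) := fun r hr y =>
    (hsmooth.contDiffAt ((hI.prod isOpen_univ).mem_nhds ⟨hr, trivial⟩)).differentiableAt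
      (by norm_num)
  have hX : ∀ r ∈ I, ∀ x A, pd V (dirX d A) (r, x) = 0 := fun r hr =>
    hV.pd_dirX_eq_zero hI hsmooth hr (hI0 hr).ne' (hfpos r hr).ne' (hf' r hr)
  have hconst : ∀ r ∈ I, ∀ x, V (r, x) = V (r, 0) := fun r hr x =>
    eq_of_forall_pd_dirX_eq_zero (hdiff r hr) (hX r hr) x 0
  have hode : ∀ r ∈ I, f r * deriv (fun s => V (s, 0)) r = deriv f r / 2 * V (r, 0) := by
    intro r hr
    have hiii := (hV r hr 0).2.2 ⟨0, hd⟩ ⟨0, hd⟩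
    rw [if_pos rfl, pd_dirX_eq_zero_of_forall_eq (fun y => hX r hr y _), pd_dirR, zero_add,
      one_mul, mul_eq_zero] at hiii
    exact sub_eq_zero.1 (hiii.resolve_left (hI0 hr).ne')
  obtain ⟨c, hc⟩ := exists_eq_mul_sqrt_of_mul_deriv_eq hI hI' hf hfpos
    (fun r hr => ((hdiff r hr 0).comp (f := fun s : ℝ => (s, (0 : Fin d → ℝ))) r
      (differentiableAt_id.prodMk (differentiableAt_const 0))).differentiableWithinAt) hode
  exact ⟨c, fun r hr x => (hconst r hr x).trans (hc r hr)⟩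

theorem isStaticPotential_const_mul_sqrt (hI : IsOpen I) (hf : ContDiffOn ℝ 2 f I)
    (hfpos : ∀ r ∈ I, 0 < f r) {c : ℝ} (h : ∀ r ∈ I, ∀ x, V (r, x) = c * √(f r)) :
    IsStaticPotential d f I V := by
  have hVr : ∀ s ∈ I, ∀ y, pd V (dirR d) (s, y) = deriv (fun s => c * √(f s)) s :=
    fun s hs y => pd_dirR_eq_deriv_of_eqOn hI (fun s hs => h s hs y) hs
  have hVX : ∀ s ∈ I, ∀ y A, pd V (dirX d A) (s, y) = 0 := fun s hs =>
    pd_dirX_eq_zero_of_forall_eq (h s hs)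
  intro r hr x
  refine ⟨?_, fun A => ?_, fun A B => ?_⟩
  · rw [pd_dirR_eq_deriv_of_eqOn hI (fun s hs => hVr s hs x) hr, hVr r hr x, h r hr x]
    exact deriv_deriv_const_mul_sqrt hI hf hfpos hr c
  · rw [pd_dirR_eq_deriv_of_eqOn hI (fun s hs => hVX s hs x A) hr, hVX r hr x A]
    simp
  · have hdf := (hf.contDiffAt (hI.mem_nhds hr)).differentiableAt two_ne_zero
    rw [pd_dirX_eq_zero_of_forall_eq (fun y => hVX r hr y B), hVr r hr x, h r hr x,
      mul_deriv_const_mul_sqrt hdf (hfpos r hr)]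
    ring

theorem isStaticPotential_iff (hd : 0 < d) (hI : IsOpen I) (hI' : IsPreconnected I)
    (hI0 : I ⊆ Ioi 0) (hf : ContDiffOn ℝ 2 f I) (hfpos : ∀ r ∈ I, 0 < f r)
    (hf' : ∀ r ∈ I, deriv f r ≠ r * deriv (deriv f) r) (hsmooth : ContDiffOn ℝ 3 V (I ×ˢ univ)) :
    IsStaticPotential d f I V ↔ ∃ c, ∀ r ∈ I, ∀ x, V (r, x) = c * √(f r) :=
  ⟨fun hV => hV.exists_eq_mul_sqrt hd hI hI' hI0 (hf.differentiableOn two_ne_zero) hfpos hf'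
    hsmooth, fun ⟨_, hc⟩ => isStaticPotential_const_mul_sqrt hI hf hfpos hc⟩

end StaticPotential

theorem static_KID_classification_BK_toroidal_general (n : ℕ) (hn : 3 ≤ n) (m : ℝ) (hm : m ≠ 0)
    (I : Set ℝ) (hIopen : IsOpen I) (hIconn : IsPreconnected I)
    (hIpos : I ⊆ Set.Ioi (0 : ℝ)) (hfpos : ∀ r ∈ I, 0 < fBK n m r)
    (V : ℝ × (Fin (n - 1) → ℝ) → ℝ)
    (hV : ContDiffOn ℝ (⊤ : ℕ∞) V (I ×ˢ (Set.univ : Set (Fin (n - 1) → ℝ)))) :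
    ((∀ r ∈ I, ∀ x : Fin (n - 1) → ℝ,
        (pd (pd V (dirR (n - 1))) (dirR (n - 1)) (r, x)
            + (deriv (fBK n m) r / (2 * fBK n m r)) * pd V (dirR (n - 1)) (r, x)
            - (deriv (deriv (fBK n m)) r / (2 * fBK n m r)) * V (r, x) = 0) ∧
        (∀ A : Fin (n - 1),
          pd (pd V (dirX (n - 1) A)) (dirR (n - 1)) (r, x)
            - (1 / r) * pd V (dirX (n - 1) A) (r, x) = 0) ∧
        (∀ A B : Fin (n - 1),
          pd (pd V (dirX (n - 1) B)) (dirX (n - 1) A) (r, x)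
            + (if A = B then (1 : ℝ) else 0) * r *
              (fBK n m r * pd V (dirR (n - 1)) (r, x)
                - (deriv (fBK n m) r / 2) * V (r, x)) = 0))
      ↔
      ∃ ct : ℝ, ∀ r ∈ I, ∀ x : Fin (n - 1) → ℝ,
        V (r, x) = ct * Real.sqrt (fBK n m r)) :=
  isStaticPotential_iff (by omega) hIopen hIconn hIpos ((contDiffOn_fBK n m).mono hIpos) hfpos
    (fun r hr => deriv_fBK_ne_mul_deriv_deriv_fBK n m (by omega) (by omega) hm (hIpos hr))
    (hV.of_le (WithTop.coe_le_coe.2 le_top))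

/-- Classification of the static potentials of the spatial Birmingham–Kottler metric
`g = f(r)⁻¹dr² + r²((dx¹)² + ⋯ + (dx^{n−1})²)` with flat (`k = 0`) conformal infinity and
coordinate mass `m ≠ 0`: a smooth `V` on `I × ℝ^{n−1}` satisfies the static KID system
(i)–(iii) iff `V(r,x) = c̃ √(f(r))` for some constant `c̃`. -/
theorem static_KID_classification_BK_toroidal (n : ℕ) (hn : 3 ≤ n) (m : ℝ) (hm : m ≠ 0)
    (I : Set ℝ) (hIopen : IsOpen I) (hIconn : IsPreconnected I) (hIne : I.Nonempty)
    (hIpos : I ⊆ Set.Ioi (0 : ℝ)) (hfpos : ∀ r ∈ I, 0 < fBK n m r)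
    (V : ℝ × (Fin (n - 1) → ℝ) → ℝ)
    (hV : ContDiffOn ℝ (⊤ : ℕ∞) V (I ×ˢ (Set.univ : Set (Fin (n - 1) → ℝ)))) :
    ((∀ r ∈ I, ∀ x : Fin (n - 1) → ℝ,
        (pd (pd V (dirR (n - 1))) (dirR (n - 1)) (r, x)
            + (deriv (fBK n m) r / (2 * fBK n m r)) * pd V (dirR (n - 1)) (r, x)
            - (deriv (deriv (fBK n m)) r / (2 * fBK n m r)) * V (r, x) = 0) ∧
        (∀ A : Fin (n - 1),
          pd (pd V (dirX (n - 1) A)) (dirR (n - 1)) (r, x)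
            - (1 / r) * pd V (dirX (n - 1) A) (r, x) = 0) ∧
        (∀ A B : Fin (n - 1),
          pd (pd V (dirX (n - 1) B)) (dirX (n - 1) A) (r, x)
            + (if A = B then (1 : ℝ) else 0) * r *
              (fBK n m r * pd V (dirR (n - 1)) (r, x)
                - (deriv (fBK n m) r / 2) * V (r, x)) = 0))
      ↔
      ∃ ct : ℝ, ∀ r ∈ I, ∀ x : Fin (n - 1) → ℝ,
        V (r, x) = ct * Real.sqrt (fBK n m r)) :=
  static_KID_classification_BK_toroidal_general n hn m hm I hIopen hIconn hIpos hfpos V hV
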